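/- arXiv:2508.19964 — 7 statements merged into one kernel-verified Lean document; each statement's English description precedes it below -/
import Mathlib

section
/- In a q-ary tree (a connected q-ary graph without cycles), the number of edges times q plus 1 equals the number of vertices, i.e. (#edges)·q + 1 = #vertices. -/
open Submodule Module

variable {K : Type*} [Field K] {n : ℕ}

/-- A `q`-ary graph on `F_q^n`: a set of 2-dimensional subspaces (the edges)
satisfying the `q`-graph property: if `⟨x, y₁⟩` and `⟨x, y₂⟩` are edges, then
`⟨x, c₁y₁ + c₂y₂⟩` is also an edge (whenever it is 2-dimensional). -/
structure QGraph (K : Type*) [Field K] (n : ℕ) where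
  edges : Set (Submodule K (Fin n → K))
  dim_two : ∀ e ∈ edges, Module.finrank K e = 2
  qprop : ∀ (x y₁ y₂ : Fin n → K) (c₁ c₂ : K),
    Submodule.span K ({x, y₁} : Set (Fin n → K)) ∈ edges →
    Submodule.span K ({x, y₂} : Set (Fin n → K)) ∈ edges →
    Module.finrank K (Submodule.span K ({x, c₁ • y₁ + c₂ • y₂} : Set (Fin n → K))) = 2 →
    Submodule.span K ({x, c₁ • y₁ + c₂ • y₂} : Set (Fin n → K)) ∈ edges

/-- The vertices of an edge set: the 1-dimensional subspaces contained in some edge. -/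
def vertexSet (E : Set (Submodule K (Fin n → K))) : Set (Submodule K (Fin n → K)) :=
  {v | Module.finrank K v = 1 ∧ ∃ e ∈ E, v ≤ e}

/-- A walk `[v₀, e₁, v₁, …, e_ℓ, v_ℓ]`: each edge `eᵢ` is incident with the vertices
`vᵢ₋₁` and `vᵢ` (which are distinct 1-dimensional subspaces). -/
structure IsWalk (E : Set (Submodule K (Fin n → K))) (ℓ : ℕ)
    (v : Fin (ℓ + 1) → Submodule K (Fin n → K))
    (e : Fin ℓ → Submodule K (Fin n → K)) : Prop where
  edge_mem : ∀ i, e i ∈ E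
  vert_dim : ∀ i, Module.finrank K (v i) = 1
  inc_left : ∀ i : Fin ℓ, v i.castSucc ≤ e i
  inc_right : ∀ i : Fin ℓ, v i.succ ≤ e i
  step_ne : ∀ i : Fin ℓ, v i.castSucc ≠ v i.succ

/-- A path: a walk with all vertices distinct. -/
def IsPath (E : Set (Submodule K (Fin n → K))) (ℓ : ℕ)
    (v : Fin (ℓ + 1) → Submodule K (Fin n → K))
    (e : Fin ℓ → Submodule K (Fin n → K)) : Prop :=
  IsWalk E ℓ v e ∧ Function.Injective v

/-- A cycle: a nontrivial closed walk with all edges distinct. -/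
def IsCycle (E : Set (Submodule K (Fin n → K))) (ℓ : ℕ)
    (v : Fin (ℓ + 1) → Submodule K (Fin n → K))
    (e : Fin ℓ → Submodule K (Fin n → K)) : Prop :=
  IsWalk E ℓ v e ∧ Function.Injective e ∧ v 0 = v (Fin.last ℓ) ∧ 0 < ℓ

/-- Connectedness: any two distinct vertices are joined by a path. -/
def Connected (E : Set (Submodule K (Fin n → K))) : Prop :=
  ∀ a ∈ vertexSet E, ∀ b ∈ vertexSet E, a ≠ b →
    ∃ (ℓ : ℕ) (v : Fin (ℓ + 1) → Submodule K (Fin n → K))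
      (e : Fin ℓ → Submodule K (Fin n → K)),
      IsPath E ℓ v e ∧ v 0 = a ∧ v (Fin.last ℓ) = b

/-- Acyclicity: there is no cycle. -/
def Acyclic (E : Set (Submodule K (Fin n → K))) : Prop :=
  ∀ (ℓ : ℕ) (v : Fin (ℓ + 1) → Submodule K (Fin n → K))
    (e : Fin ℓ → Submodule K (Fin n → K)), ¬ IsCycle E ℓ v e

/-- A tree: a connected acyclic edge set. -/
def IsTree (E : Set (Submodule K (Fin n → K))) : Prop :=
  Connected E ∧ Acyclic E

/-- The neighbourhood of a vertex `X`: the union (span) of all edges through `X`,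
together with `X` itself. A vertex `X` has degree `d` when this space has
dimension `d + 1`. -/
def nbhd (E : Set (Submodule K (Fin n → K))) (X : Submodule K (Fin n → K)) :
    Submodule K (Fin n → K) :=
  X ⊔ sSup {e | e ∈ E ∧ X ≤ e}


/-! ### Auxiliary material for the proof of `stmt1`. -/

section StmtAux

open SimpleGraph

/-- `getVert` agrees with indexing into the support list. -/
private lemma walk_getVert_eq_support_getElem {V : Type*} {G : SimpleGraph V} {u v : V}
    (p : G.Walk u v) {i : ℕ} (h : i ≤ p.length) :
    p.getVert i = p.support[i]'(by rw [SimpleGraph.Walk.length_support]; omega) := by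
  induction p generalizing i with
  | nil =>
    have hi : i = 0 := by simpa using h
    subst hi
    simp [SimpleGraph.Walk.getVert_zero]
  | cons h' q ih =>
    cases i with
    | zero => simp [SimpleGraph.Walk.getVert_zero]
    | succ i =>
      simp only [SimpleGraph.Walk.support_cons, SimpleGraph.Walk.getVert_cons_succ,
        List.getElem_cons_succ]
      exact ih (by simpa using h)

/-- On a cycle, `getVert` is injective on indices `1, …, length`. -/
private lemma cycle_getVert_inj {V : Type*} {G : SimpleGraph V} {u : V} {p : G.Walk u u}
    (hp : p.IsCycle) {i j : ℕ} (hi1 : 1 ≤ i) (hi2 : i ≤ p.length) (hj1 : 1 ≤ j)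
    (hj2 : j ≤ p.length) (h : p.getVert i = p.getVert j) : i = j := by
  have hnd := hp.support_nodup
  have hlen : p.support.tail.length = p.length := by
    rw [List.length_tail, SimpleGraph.Walk.length_support]
    omega
  have key : ∀ m : ℕ, 1 ≤ m → (hm2 : m ≤ p.length) →
      p.getVert m = p.support.tail[m - 1]'(by omega) := by
    intro m hm1 hm2
    obtain ⟨m, rfl⟩ : ∃ k, m = k + 1 := ⟨m - 1, by omega⟩
    simp only [Nat.add_sub_cancel, List.getElem_tail]
    exact walk_getVert_eq_support_getElem p hm2
  rw [key i hi1 hi2, key j hj1 hj2] at h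
  have := (hnd.getElem_inj_iff (hi := by omega) (hj := by omega)).1 h
  omega

variable {K : Type*} [Field K] {n : ℕ} [Fintype K]

/-- The bipartite incidence graph of an edge set: vertices on one side,
edges on the other, adjacency is incidence. -/
private def IncG (E : Set (Submodule K (Fin n → K))) :
    SimpleGraph (↥(vertexSet E) ⊕ ↥E) where
  Adj x y :=
    match x, y with
    | Sum.inl v, Sum.inr e => (v : Submodule K (Fin n → K)) ≤ (e : Submodule K (Fin n → K))
    | Sum.inr e, Sum.inl v => (v : Submodule K (Fin n → K)) ≤ (e : Submodule K (Fin n → K))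
    | _, _ => False
  symm := ⟨by rintro (v | e) (w | f) h <;> exact h⟩
  loopless := ⟨by rintro (v | e) h <;> exact h⟩

private lemma incG_adj_cases {E : Set (Submodule K (Fin n → K))}
    {x y : ↥(vertexSet E) ⊕ ↥E} (h : (IncG E).Adj x y) :
    (∃ v e, x = Sum.inl v ∧ y = Sum.inr e ∧
        (v : Submodule K (Fin n → K)) ≤ (e : Submodule K (Fin n → K))) ∨
    (∃ e v, x = Sum.inr e ∧ y = Sum.inl v ∧
        (v : Submodule K (Fin n → K)) ≤ (e : Submodule K (Fin n → K))) := by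
  rcases x with v | e <;> rcases y with w | f
  · exact (h : False).elim
  · exact Or.inl ⟨v, f, rfl, rfl, h⟩
  · exact Or.inr ⟨e, w, rfl, rfl, h⟩
  · exact (h : False).elim

/-- Every vertex of a walk (of positive length) is in the vertex set. -/
private lemma walk_vert_mem {E : Set (Submodule K (Fin n → K))} {ℓ : ℕ}
    {v : Fin (ℓ + 1) → Submodule K (Fin n → K)} {e : Fin ℓ → Submodule K (Fin n → K)}
    (hw : IsWalk E ℓ v e) (hl : 0 < ℓ) (i : Fin (ℓ + 1)) : v i ∈ vertexSet E := by
  by_cases h : (i : ℕ) < ℓ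
  · refine ⟨hw.vert_dim i, e ⟨i, h⟩, hw.edge_mem _, ?_⟩
    have hcast : (⟨(i : ℕ), h⟩ : Fin ℓ).castSucc = i := Fin.ext rfl
    exact le_of_eq_of_le (congrArg v hcast).symm (hw.inc_left ⟨(i : ℕ), h⟩)
  · have hi : (i : ℕ) = ℓ := by omega
    refine ⟨hw.vert_dim i, e ⟨ℓ - 1, by omega⟩, hw.edge_mem _, ?_⟩
    have hcast : (⟨ℓ - 1, by omega⟩ : Fin ℓ).succ = i := by
      apply Fin.ext
      simp [hi]
      omega
    exact le_of_eq_of_le (congrArg v hcast).symm (hw.inc_right ⟨ℓ - 1, by omega⟩)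

/-- A walk in `E` yields reachability in the incidence graph. -/
private lemma reachable_of_walk {E : Set (Submodule K (Fin n → K))} {ℓ : ℕ}
    {v : Fin (ℓ + 1) → Submodule K (Fin n → K)} {e : Fin ℓ → Submodule K (Fin n → K)}
    (hw : IsWalk E ℓ v e) (hl : 0 < ℓ) :
    (IncG E).Reachable (Sum.inl ⟨v 0, walk_vert_mem hw hl 0⟩)
      (Sum.inl ⟨v (Fin.last ℓ), walk_vert_mem hw hl (Fin.last ℓ)⟩) := by
  have H : ∀ m : ℕ, (hm : m ≤ ℓ) →
      (IncG E).Reachable (Sum.inl ⟨v 0, walk_vert_mem hw hl 0⟩)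
        (Sum.inl ⟨v ⟨m, by omega⟩, walk_vert_mem hw hl ⟨m, by omega⟩⟩) := by
    intro m
    induction m with
    | zero =>
      intro _
      have : (⟨0, by omega⟩ : Fin (ℓ + 1)) = 0 := Fin.ext rfl
      rw [this]
    | succ m ih =>
      intro hm
      refine (ih (by omega)).trans ?_
      set j : Fin ℓ := ⟨m, by omega⟩ with hj
      have h1 : (IncG E).Adj (Sum.inl ⟨v ⟨m, by omega⟩, walk_vert_mem hw hl ⟨m, by omega⟩⟩)
          (Sum.inr ⟨e j, hw.edge_mem j⟩) := by
        have hcast : j.castSucc = (⟨m, by omega⟩ : Fin (ℓ + 1)) := Fin.ext rfl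
        have := hw.inc_left j
        rw [hcast] at this
        exact this
      have h2 : (IncG E).Adj (Sum.inr ⟨e j, hw.edge_mem j⟩)
          (Sum.inl ⟨v ⟨m + 1, by omega⟩, walk_vert_mem hw hl ⟨m + 1, by omega⟩⟩) := by
        have hcast : j.succ = (⟨m + 1, by omega⟩ : Fin (ℓ + 1)) := Fin.ext rfl
        have := hw.inc_right j
        rw [hcast] at this
        exact this
      exact (h1.reachable).trans h2.reachable
  have := H ℓ le_rfl
  have hcast : (⟨ℓ, by omega⟩ : Fin (ℓ + 1)) = Fin.last ℓ := Fin.ext rfl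
  rw [hcast] at this
  exact this

private lemma incG_connected {E : Set (Submodule K (Fin n → K))} (hne : E.Nonempty)
    (hdim : ∀ e ∈ E, Module.finrank K e = 2) (hconn : Connected E) :
    (IncG E).Connected := by
  have hvert : ∀ e : ↥E, ∃ w : ↥(vertexSet E), (IncG E).Adj (Sum.inr e) (Sum.inl w) := by
    intro e
    have h2 := hdim e e.2
    have hbot : (e : Submodule K (Fin n → K)) ≠ ⊥ := by
      intro hb
      rw [hb] at h2
      simp [finrank_bot] at h2
    obtain ⟨x, hxe, hx0⟩ := Submodule.exists_mem_ne_zero_of_ne_bot hbot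
    have hle : Submodule.span K {x} ≤ (e : Submodule K (Fin n → K)) :=
      (Submodule.span_singleton_le_iff_mem x _).2 hxe
    exact ⟨⟨Submodule.span K {x}, finrank_span_singleton hx0, e, e.2, hle⟩, hle⟩
  have key : ∀ a b : ↥(vertexSet E), (IncG E).Reachable (Sum.inl a) (Sum.inl b) := by
    intro a b
    by_cases hab : a = b
    · rw [hab]
    · have hne' : (a : Submodule K (Fin n → K)) ≠ (b : Submodule K (Fin n → K)) :=
        fun h => hab (Subtype.ext h)
      obtain ⟨ℓ, v, e, ⟨hw, _⟩, h0, h1⟩ := hconn a a.2 b b.2 hne'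
      have hl : 0 < ℓ := by
        rcases Nat.eq_zero_or_pos ℓ with h | h
        · exfalso
          subst h
          exact hne' (h0.symm.trans h1)
        · exact h
      have hr := reachable_of_walk hw hl
      have e0 : (⟨v 0, walk_vert_mem hw hl 0⟩ : ↥(vertexSet E)) = a := Subtype.ext h0
      have e1 : (⟨v (Fin.last ℓ), walk_vert_mem hw hl (Fin.last ℓ)⟩ : ↥(vertexSet E)) = b :=
        Subtype.ext h1
      rw [e0, e1] at hr
      exact hr
  rw [SimpleGraph.connected_iff]
  refine ⟨?_, ⟨Sum.inr ⟨hne.choose, hne.choose_spec⟩⟩⟩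
  rintro (a | e) (b | f)
  · exact key a b
  · obtain ⟨w, hw⟩ := hvert f
    exact (key a w).trans hw.reachable.symm
  · obtain ⟨w, hw⟩ := hvert e
    exact (hw.reachable).trans (key w b)
  · obtain ⟨w1, hw1⟩ := hvert e
    obtain ⟨w2, hw2⟩ := hvert f
    exact hw1.reachable.trans ((key w1 w2).trans hw2.reachable.symm)

private lemma incG_acyclic {E : Set (Submodule K (Fin n → K))} (hA : Acyclic E) :
    (IncG E).IsAcyclic := by
  classical
  have key : ∀ (a : ↥(vertexSet E)) (c : (IncG E).Walk (Sum.inl a) (Sum.inl a)),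
      ¬ c.IsCycle := by
    intro a c hc
    have halt : ∀ i, i ≤ c.length →
        (Even i → ∃ w, c.getVert i = Sum.inl w) ∧
        (¬ Even i → ∃ f, c.getVert i = Sum.inr f) := by
      intro i
      induction i with
      | zero =>
        intro _
        exact ⟨fun _ => ⟨a, c.getVert_zero⟩, fun h => absurd Even.zero h⟩
      | succ i ih =>
        intro h
        have hi := ih (by omega)
        have hadj := c.adj_getVert_succ (by omega : i < c.length)
        constructor
        · intro hev
          have hodd : ¬ Even i := by
            rw [Nat.even_add_one] at hev
            exact hev
          obtain ⟨f, hf⟩ := hi.2 hodd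
          rw [hf] at hadj
          rcases hy : c.getVert (i + 1) with w | f'
          · exact ⟨w, rfl⟩
          · rw [hy] at hadj
            exact (hadj : False).elim
        · intro hodd
          have hev : Even i := by
            rw [Nat.even_add_one, not_not] at hodd
            exact hodd
          obtain ⟨w, hw⟩ := hi.1 hev
          rw [hw] at hadj
          rcases hy : c.getVert (i + 1) with w' | f'
          · rw [hy] at hadj
            exact (hadj : False).elim
          · exact ⟨f', rfl⟩
    have hevenlen : Even c.length := by
      by_contra hodd
      obtain ⟨f, hf⟩ := (halt c.length le_rfl).2 hodd
      rw [c.getVert_length] at hf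
      exact Sum.inl_ne_inr hf
    obtain ⟨ℓ, hll⟩ := hevenlen
    have hll : c.length = 2 * ℓ := by omega
    have h3 := hc.three_le_length
    have hl2 : 2 ≤ ℓ := by omega
    have hinl : ∀ i : ℕ, i ≤ ℓ → ∃ w, c.getVert (2 * i) = Sum.inl w := by
      intro i hi
      exact (halt (2 * i) (by omega)).1 ⟨i, by ring⟩
    have hinr : ∀ i : ℕ, i < ℓ → ∃ f, c.getVert (2 * i + 1) = Sum.inr f := by
      intro i hi
      refine (halt (2 * i + 1) (by omega)).2 ?_
      rw [Nat.even_add_one, not_not]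
      exact ⟨i, by ring⟩
    obtain ⟨f0, _⟩ := hinr 0 (by omega)
    obtain ⟨V', hV'⟩ : ∃ V' : ℕ → ↥(vertexSet E), ∀ i, i ≤ ℓ →
        c.getVert (2 * i) = Sum.inl (V' i) := by
      choose f hf using hinl
      exact ⟨fun i => if h : i ≤ ℓ then f i h else a,
        fun i h => by simp only [dif_pos h]; exact hf i h⟩
    obtain ⟨E', hE'⟩ : ∃ E' : ℕ → ↥E, ∀ i, i < ℓ →
        c.getVert (2 * i + 1) = Sum.inr (E' i) := by
      choose f hf using hinr
      exact ⟨fun i => if h : i < ℓ then f i h else f0,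
        fun i h => by simp only [dif_pos h]; exact hf i h⟩
    refine hA ℓ (fun i => ↑(V' i.1)) (fun i => ↑(E' i.1))
      ⟨⟨?_, ?_, ?_, ?_, ?_⟩, ?_, ?_, by omega⟩
    · intro i
      exact (E' i.1).2
    · intro i
      exact (V' i.1).2.1
    · intro i
      have hadj := c.adj_getVert_succ (show 2 * i.1 < c.length by omega)
      rw [hV' i.1 (by omega), hE' i.1 i.isLt] at hadj
      show (↑(V' (i.castSucc : ℕ)) : Submodule K (Fin n → K)) ≤ ↑(E' (i : ℕ))
      rw [Fin.coe_castSucc]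
      exact hadj
    · intro i
      have hadj := c.adj_getVert_succ (show 2 * i.1 + 1 < c.length by omega)
      have hidx : 2 * i.1 + 1 + 1 = 2 * (i.1 + 1) := by ring
      rw [hidx] at hadj
      rw [hE' i.1 i.isLt, hV' (i.1 + 1) (by omega)] at hadj
      show (↑(V' (i.succ : ℕ)) : Submodule K (Fin n → K)) ≤ ↑(E' (i : ℕ))
      rw [Fin.val_succ]
      exact hadj
    · intro i heq
      have heq' : (↑(V' (i : ℕ)) : Submodule K (Fin n → K)) = ↑(V' ((i : ℕ) + 1)) := by
        have h1 : (↑(V' (i.castSucc : ℕ)) : Submodule K (Fin n → K)) = ↑(V' (i.succ : ℕ)) := heq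
        rwa [Fin.coe_castSucc, Fin.val_succ] at h1
      have h12 : c.getVert (2 * i.1) = c.getVert (2 * (i.1 + 1)) := by
        rw [hV' i.1 (by omega), hV' (i.1 + 1) (by omega)]
        exact congrArg Sum.inl (Subtype.ext heq')
      rcases Nat.eq_zero_or_pos i.1 with h0 | hpos
      · rw [h0] at h12
        have hzl : c.getVert c.length = c.getVert 2 := by
          rw [c.getVert_length]
          have h00 : c.getVert (2 * 0) = Sum.inl a := by
            rw [Nat.mul_zero, c.getVert_zero]
          rw [h00, show 2 * (0 + 1) = 2 from rfl] at h12
          exact h12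
        have := cycle_getVert_inj hc (by omega) le_rfl (by norm_num) (by omega) hzl
        omega
      · have := cycle_getVert_inj hc (by omega) (by omega) (by omega) (by omega) h12
        omega
    · intro i j hij
      have h12 : c.getVert (2 * i.1 + 1) = c.getVert (2 * j.1 + 1) := by
        rw [hE' i.1 i.isLt, hE' j.1 j.isLt]
        exact congrArg Sum.inr (Subtype.ext hij)
      have := cycle_getVert_inj hc (by omega) (by omega) (by omega) (by omega) h12
      exact Fin.ext (by omega)
    · have h0 := hV' 0 (by omega)
      rw [Nat.mul_zero, c.getVert_zero] at h0
      have hLl := hV' ℓ le_rfl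
      rw [show 2 * ℓ = c.length from hll.symm, c.getVert_length] at hLl
      show (↑(V' ((0 : Fin (ℓ + 1)) : ℕ)) : Submodule K (Fin n → K)) = ↑(V' ((Fin.last ℓ) : ℕ))
      rw [Fin.val_zero, Fin.val_last, ← Sum.inl.inj h0, ← Sum.inl.inj hLl]
  intro x c hc
  rcases x with a | e
  · exact key a c hc
  · have hnn := hc.not_nil
    have h3 := hc.three_le_length
    have hadj := c.adj_snd hnn
    rcases incG_adj_cases hadj with ⟨v', e', hx, hy, _⟩ | ⟨e', v', hx, hy, _⟩
    · exact Sum.inr_ne_inl hx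
    · have hmem : c.getVert 1 ∈ c.support :=
        SimpleGraph.Walk.mem_support_iff_exists_getVert.2 ⟨1, rfl, by omega⟩
      have hc' := hc.rotate hmem
      exact key v' ((c.rotate _ hmem).copy hy hy) (by rwa [SimpleGraph.Walk.isCycle_copy])

/-- The number of lines (1-dimensional subspaces) inside a 2-dimensional space is `q + 1`. -/
private lemma ncard_lines (e : Submodule K (Fin n → K)) (he : Module.finrank K e = 2) :
    {v : Submodule K (Fin n → K) | Module.finrank K v = 1 ∧ v ≤ e}.ncard =
      Fintype.card K + 1 := by
  classical
  set q := Fintype.card K with hq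
  haveI : Finite (Submodule K (Fin n → K)) :=
    Finite.of_injective (fun s => (s : Set (Fin n → K))) SetLike.coe_injective
  haveI : Fintype (Submodule K (Fin n → K)) := Fintype.ofFinite _
  have hq2 : 2 ≤ q := Fintype.one_lt_card
  -- cardinality of a subspace of finrank r is q ^ r
  have hcard : ∀ (p : Submodule K (Fin n → K)),
      Fintype.card p = q ^ Module.finrank K p := by
    intro p
    exact card_eq_pow_finrank
  -- nonzero elements of a submodule
  have hnz : ∀ (p : Submodule K (Fin n → K)),
      (Finset.univ.filter (fun x : Fin n → K => x ∈ p ∧ x ≠ 0)).card =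
        q ^ Module.finrank K p - 1 := by
    intro p
    rw [← Fintype.card_subtype]
    have he1 : Fintype.card {x : Fin n → K // x ∈ p ∧ x ≠ 0} =
        Fintype.card {y : p // y ≠ 0} := by
      apply Fintype.card_congr
      refine ⟨fun x => ⟨⟨x.1, x.2.1⟩, fun h => x.2.2 (by simpa using congrArg Subtype.val h)⟩,
        fun y => ⟨y.1.1, y.1.2, fun h => y.2 (by exact Subtype.ext h)⟩, ?_, ?_⟩
      · intro x; rfl
      · intro y; rfl
    rw [he1]
    have := Fintype.card_subtype_compl (fun y : p => y = 0)
    simp only [Fintype.card_subtype_eq] at this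
    calc Fintype.card {y : p // y ≠ 0} = Fintype.card p - 1 := this
      _ = q ^ Module.finrank K p - 1 := by rw [hcard p]
  -- fiberwise counting
  set F : Finset (Fin n → K) := Finset.univ.filter (fun x => x ∈ e ∧ x ≠ 0) with hF
  set L : Finset (Submodule K (Fin n → K)) :=
    Finset.univ.filter (fun v => Module.finrank K v = 1 ∧ v ≤ e) with hL
  have hmap : ∀ x ∈ F, Submodule.span K {x} ∈ L := by
    intro x hx
    rw [hF, Finset.mem_filter] at hx
    rw [hL, Finset.mem_filter]
    exact ⟨Finset.mem_univ _, finrank_span_singleton hx.2.2,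
      (Submodule.span_singleton_le_iff_mem x _).2 hx.2.1⟩
  have hfib := Finset.card_eq_sum_card_fiberwise hmap
  have hfibcard : ∀ v ∈ L, (F.filter (fun x => Submodule.span K {x} = v)).card = q - 1 := by
    intro v hv
    rw [hL, Finset.mem_filter] at hv
    have hset : F.filter (fun x => Submodule.span K {x} = v) =
        Finset.univ.filter (fun x : Fin n → K => x ∈ v ∧ x ≠ 0) := by
      ext x
      simp only [hF, Finset.mem_filter, Finset.mem_univ, true_and]
      constructor
      · rintro ⟨⟨hxe, hx0⟩, hsp⟩
        exact ⟨hsp ▸ Submodule.mem_span_singleton_self x, hx0⟩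
      · rintro ⟨hxv, hx0⟩
        have hle : Submodule.span K {x} ≤ v := (Submodule.span_singleton_le_iff_mem x _).2 hxv
        have heq : Submodule.span K {x} = v := by
          apply Submodule.eq_of_le_of_finrank_le hle
          rw [hv.2.1, finrank_span_singleton hx0]
        exact ⟨⟨hv.2.2 hxv, hx0⟩, heq⟩
    rw [hset, hnz v, hv.2.1, pow_one]
  rw [Finset.sum_congr rfl hfibcard, Finset.sum_const, smul_eq_mul] at hfib
  have hFcard : F.card = q ^ 2 - 1 := by
    rw [hF, hnz e, he]
  rw [hFcard] at hfib
  have hLcard : L.card = q + 1 := by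
    obtain ⟨r, hr⟩ : ∃ r, q = r + 1 := ⟨q - 1, by omega⟩
    have hq2' : q ^ 2 = r * (r + 2) + 1 := by rw [hr]; ring
    have hsub : q ^ 2 - 1 = r * (r + 2) := by omega
    have hr1 : q - 1 = r := by omega
    rw [hsub, hr1] at hfib
    have hmul : (r + 2) * r = L.card * r := by rw [← hfib]; ring
    have hL2 := Nat.eq_of_mul_eq_mul_right (by omega : 0 < r) hmul
    omega
  rw [← hLcard]
  rw [← Nat.card_coe_set_eq, Nat.card_eq_fintype_card, Fintype.card_subtype]
  congr 1

end StmtAux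

/-- in a `q`-ary tree, `(#edges)·q + 1 = #vertices`. -/
theorem stmt1 [Fintype K] (G : QGraph K n) (hne : G.edges.Nonempty)
    (htree : IsTree G.edges) :
    G.edges.ncard * Fintype.card K + 1 = (vertexSet G.edges).ncard := by
  classical
  obtain ⟨htc, hta⟩ := htree
  set E := G.edges with hE
  haveI : Finite (Submodule K (Fin n → K)) :=
    Finite.of_injective (fun s => (s : Set (Fin n → K))) SetLike.coe_injective
  haveI : Fintype (Submodule K (Fin n → K)) := Fintype.ofFinite _
  haveI : Fintype ↥(vertexSet E) := Fintype.ofFinite _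
  haveI : Fintype ↥E := Fintype.ofFinite _
  haveI : DecidableEq (↥(vertexSet E) ⊕ ↥E) := Classical.decEq _
  haveI : DecidableRel (IncG E).Adj := Classical.decRel _
  have htree' : (IncG E).IsTree :=
    ⟨incG_connected hne G.dim_two htc, incG_acyclic hta⟩
  have hcount := htree'.card_edgeFinset
  rw [Fintype.card_sum] at hcount
  -- compute the number of edges of the incidence graph
  have hbij : Function.Bijective
      (fun p : {p : ↥E × ↥(vertexSet E) //
          (p.2 : Submodule K (Fin n → K)) ≤ (p.1 : Submodule K (Fin n → K))} =>
        (⟨s(Sum.inl p.1.2, Sum.inr p.1.1), p.2⟩ : (IncG E).edgeSet)) := by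
    constructor
    · rintro ⟨⟨e1, v1⟩, h1⟩ ⟨⟨e2, v2⟩, h2⟩ h
      have h' : (s(Sum.inl v1, Sum.inr e1) : Sym2 (↥(vertexSet E) ⊕ ↥E)) =
          s(Sum.inl v2, Sum.inr e2) := congrArg Subtype.val h
      rw [Sym2.eq_iff] at h'
      rcases h' with ⟨hv, he⟩ | ⟨hv, he⟩
      · exact Subtype.ext (Prod.ext (Sum.inr.inj he) (Sum.inl.inj hv))
      · exact (Sum.inl_ne_inr hv).elim
    · rintro ⟨s, hs⟩
      induction s using Sym2.ind with
      | _ x y =>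
        have hadj : (IncG E).Adj x y := hs
        rcases incG_adj_cases hadj with ⟨v', e', hx, hy, hle⟩ | ⟨e', v', hx, hy, hle⟩
        · subst hx; subst hy
          exact ⟨⟨(e', v'), hle⟩, Subtype.ext rfl⟩
        · subst hx; subst hy
          exact ⟨⟨(e', v'), hle⟩, Subtype.ext Sym2.eq_swap⟩
  have hedgecard : (IncG E).edgeFinset.card = E.ncard * (Fintype.card K + 1) := by
    rw [SimpleGraph.edgeFinset_card]
    rw [← Fintype.card_congr (Equiv.ofBijective _ hbij)]
    rw [Fintype.card_congr (Equiv.subtypeProdEquivSigmaSubtype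
      (fun (e : ↥E) (v : ↥(vertexSet E)) =>
        (v : Submodule K (Fin n → K)) ≤ (e : Submodule K (Fin n → K))))]
    rw [Fintype.card_sigma]
    have hper : ∀ e : ↥E,
        Fintype.card {v : ↥(vertexSet E) //
          (v : Submodule K (Fin n → K)) ≤ (e : Submodule K (Fin n → K))} =
          Fintype.card K + 1 := by
      intro e
      have hlines := ncard_lines (e : Submodule K (Fin n → K)) (G.dim_two e e.2)
      rw [← Nat.card_coe_set_eq, Nat.card_eq_fintype_card] at hlines
      rw [← hlines]
      apply Fintype.card_congr
      refine ⟨fun v => ⟨v.1.1, v.1.2.1, v.2⟩,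
        fun v => ⟨⟨v.1, v.2.1, (e : Submodule K (Fin n → K)), e.2, v.2.2⟩, v.2.2⟩, ?_, ?_⟩
      · intro v; rfl
      · intro v; rfl
    rw [Finset.sum_congr rfl (fun e _ => hper e), Finset.sum_const, smul_eq_mul,
      Finset.card_univ]
    congr 1
    rw [← Nat.card_coe_set_eq, Nat.card_eq_fintype_card]
  have hV : Fintype.card ↥(vertexSet E) = (vertexSet E).ncard := by
    rw [← Nat.card_coe_set_eq, Nat.card_eq_fintype_card]
  have hEc : Fintype.card ↥E = E.ncard := by
    rw [← Nat.card_coe_set_eq, Nat.card_eq_fintype_card]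
  rw [hedgecard, hV, hEc] at hcount
  have hexp : E.ncard * (Fintype.card K + 1) = E.ncard * Fintype.card K + E.ncard := by ring
  omega
end

section
/- Let u in F_{q^m}^m have F_q-linearly independent entries, and let v1, v2 be nonzero vectors in F_{q^m}^m of rank weight 2 with the same rank support A (a 2-dimensional F_q-subspace) and both orthogonal to u. Then for all α1, α2 in F_{q^m} with α1·v1 + α2·v2 ≠ 0, the vector α1·v1 + α2·v2 also has rank support A (and is orthogonal to u). -/
open Submodule Module

variable {K L : Type*} [Field K] [Field L] [Algebra K L] {m : ℕ}

/-- The rank support of a vector `v ∈ F_{q^m}^m`: expanding each entry of `v`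
over an `F_q`-basis `B` of `F_{q^m}` gives an `m × m` matrix over `F_q`;
the rank support is its row space, an `F_q`-subspace of `F_q^m`. -/
noncomputable def rsupp (B : Basis (Fin m) K L) (v : Fin m → L) :
    Submodule K (Fin m → K) :=
  Submodule.span K (Set.range fun i => fun j => B.repr (v j) i)


lemma row_mem (B : Basis (Fin m) K L) (v : Fin m → L) (i : Fin m) :
    (fun j => B.repr (v j) i) ∈ rsupp B v :=
  subset_span ⟨i, rfl⟩

lemma rsupp_eq_bot (B : Basis (Fin m) K L) (v : Fin m → L) (h : rsupp B v = ⊥) : v = 0 := by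
  funext j
  have h0 : ∀ i, B.repr (v j) i = 0 := by
    intro i
    have := row_mem B v i
    rw [h, mem_bot] at this
    exact congrFun this j
  have := B.sum_repr (v j)
  simp [h0] at this
  simpa using this.symm

lemma rsupp_smul_le (B : Basis (Fin m) K L) (α : L) (v : Fin m → L) :
    rsupp B (α • v) ≤ rsupp B v := by
  rw [rsupp, span_le]
  rintro _ ⟨k, rfl⟩
  have hrow : (fun j => B.repr ((α • v) j) k)
      = ∑ i, (B.repr (α * B i) k) • (fun j => B.repr (v j) i) := by
    funext j
    have h1 : (α • v) j = ∑ i, B.repr (v j) i • (α * B i) := by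
      calc (α • v) j = α * v j := rfl
      _ = α * ∑ i, B.repr (v j) i • B i := by rw [B.sum_repr (v j)]
      _ = ∑ i, B.repr (v j) i • (α * B i) := by
          rw [Finset.mul_sum]; exact Finset.sum_congr rfl fun i _ => mul_smul_comm _ _ _
    rw [h1]
    simp [mul_comm]
  show (fun j => B.repr ((α • v) j) k) ∈ (rsupp B v : Set (Fin m → K))
  rw [hrow]
  exact Submodule.sum_mem _ fun i _ => smul_mem _ _ (row_mem B v i)

lemma rsupp_add_le (B : Basis (Fin m) K L) (v w : Fin m → L) :
    rsupp B (v + w) ≤ rsupp B v ⊔ rsupp B w := by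
  rw [rsupp, span_le]
  rintro _ ⟨k, rfl⟩
  have : (fun j => B.repr ((v + w) j) k)
      = (fun j => B.repr (v j) k) + (fun j => B.repr (w j) k) := by
    funext j; simp
  show (fun j => B.repr ((v + w) j) k) ∈ ((rsupp B v ⊔ rsupp B w : Submodule K (Fin m → K)) : Set (Fin m → K))
  rw [this]
  exact add_mem (mem_sup_left (row_mem B v k)) (mem_sup_right (row_mem B w k))

lemma not_rank_le_one (B : Basis (Fin m) K L) (u : Fin m → L) (hu : LinearIndependent K u)
    (w : Fin m → L) (hw : w ≠ 0) (ho : (∑ i, w i * u i) = 0)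
    (c : Fin m → K) (hle : rsupp B w ≤ Submodule.span K {c}) : False := by
  choose t ht using fun i => Submodule.mem_span_singleton.mp (hle (row_mem B w i))
  set β := ∑ i, t i • B i with hβ
  have hwj : ∀ j, w j = c j • β := by
    intro j
    have hrepr : ∀ i, B.repr (w j) i = t i * c j := by
      intro i
      have := congrFun (ht i) j
      simpa [mul_comm] using this.symm
    calc w j = ∑ i, B.repr (w j) i • B i := (B.sum_repr (w j)).symm
    _ = ∑ i, c j • (t i • B i) := by
        refine Finset.sum_congr rfl fun i _ => ?_
        rw [hrepr i, mul_comm, mul_smul]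
    _ = c j • β := by rw [hβ, Finset.smul_sum]
  have hβne : β ≠ 0 := by
    intro h0
    apply hw
    funext j
    simp [hwj j, h0]
  have hsum : (∑ j, c j • u j) = 0 := by
    have : (∑ j, w j * u j) = β * ∑ j, c j • u j := by
      rw [Finset.mul_sum]
      refine Finset.sum_congr rfl fun j _ => ?_
      rw [hwj j, Algebra.smul_def, Algebra.smul_def]
      ring
    rw [this] at ho
    rcases mul_eq_zero.mp ho with h | h
    · exact absurd h hβne
    · exact h
  have hc : ∀ j, c j = 0 := by
    have := Fintype.linearIndependent_iff.mp hu c hsum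
    exact this
  apply hw
  funext j
  simp [hwj j, hc j]

/-- if `v₁, v₂` are nonzero vectors of rank weight 2 with the same rank
support `A` and both orthogonal to `u` (whose entries are `F_q`-linearly independent),
then any nonzero `F_{q^m}`-linear combination `α₁v₁ + α₂v₂` again has rank support `A`
and is orthogonal to `u`. -/
theorem stmt5 (B : Basis (Fin m) K L) (u : Fin m → L) (hu : LinearIndependent K u)
    (A : Submodule K (Fin m → K)) (hA : Module.finrank K A = 2)
    (v₁ v₂ : Fin m → L) (hv₁ : v₁ ≠ 0) (hv₂ : v₂ ≠ 0)
    (hr₁ : rsupp B v₁ = A) (hr₂ : rsupp B v₂ = A)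
    (ho₁ : (∑ i, v₁ i * u i) = 0) (ho₂ : (∑ i, v₂ i * u i) = 0)
    (α₁ α₂ : L) (hne : α₁ • v₁ + α₂ • v₂ ≠ 0) :
    rsupp B (α₁ • v₁ + α₂ • v₂) = A ∧ (∑ i, (α₁ • v₁ + α₂ • v₂) i * u i) = 0 := by
  set w := α₁ • v₁ + α₂ • v₂ with hw
  have horth : (∑ i, w i * u i) = 0 := by
    have : (∑ i, w i * u i) = α₁ * (∑ i, v₁ i * u i) + α₂ * (∑ i, v₂ i * u i) := by
      rw [Finset.mul_sum, Finset.mul_sum, ← Finset.sum_add_distrib]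
      refine Finset.sum_congr rfl fun i _ => ?_
      simp [hw, add_mul, mul_assoc]
    rw [this, ho₁, ho₂]; ring
  refine ⟨?_, horth⟩
  have hle : rsupp B w ≤ A := by
    calc rsupp B w ≤ rsupp B (α₁ • v₁) ⊔ rsupp B (α₂ • v₂) := rsupp_add_le B _ _
    _ ≤ A := sup_le ((rsupp_smul_le B α₁ v₁).trans hr₁.le)
        ((rsupp_smul_le B α₂ v₂).trans hr₂.le)
  have hfin : 2 ≤ finrank K (rsupp B w) := by
    by_contra h
    push_neg at h
    have h1 : finrank K (rsupp B w) ≤ 1 := Nat.lt_succ_iff.mp h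
    have := (Submodule.finrank_le_one_iff_isPrincipal _).mp h1
    obtain ⟨c, hc⟩ := this
    exact not_rank_le_one B u hu w hne horth c hc.le
  have : FiniteDimensional K A := FiniteDimensional.finiteDimensional_submodule A
  exact Submodule.eq_of_le_of_finrank_le hle (hA.trans_le hfin)
end

section
/- Let u in F_{q^m}^m have F_q-linearly independent entries and let A be a 2-dimensional subspace of F_q^m. Then the set of vectors in F_{q^m}^m with rank support equal to A and orthogonal to u has exactly q^m - 1 elements, and any two such vectors are F_{q^m}^*-multiples of each other. (A representation of an edge is unique up to scalar multiplication by F_{q^m}^*.) -/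
open Submodule Module

variable {K L : Type*} [Field K] [Field L] [Algebra K L] {m : ℕ}

lemma span_comb (B : Basis (Fin m) K L) (x y : Fin m → K) (a b : L)
    (hab : ∀ α β : K, α • a + β • b = 0 → α = 0 ∧ β = 0) :
    span K (Set.range fun i => B.repr a i • x + B.repr b i • y) = span K {x, y} := by
  set p : Fin m → K := fun i => B.repr a i with hp
  set q : Fin m → K := fun i => B.repr b i with hq
  -- the pairs (p i, q i) span K²
  have hspan : span K (Set.range fun i => ![p i, q i]) = (⊤ : Submodule K (Fin 2 → K)) := by
    by_contra h
    have hlt : span K (Set.range fun i => ![p i, q i]) < ⊤ := lt_top_iff_ne_top.mpr h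
    have hfr : finrank K (span K (Set.range fun i => ![p i, q i])) < 2 := by
      have := Submodule.finrank_lt hlt.ne
      simpa [Module.finrank_fin_fun] using this
    -- get a nonzero functional (α, β) vanishing on all pairs
    have hkey : ∃ α β : K, ¬(α = 0 ∧ β = 0) ∧ ∀ i, α * p i + β * q i = 0 := by
      rcases eq_or_ne (span K (Set.range fun i => ![p i, q i])) ⊥ with hbot | hne
      · refine ⟨1, 0, by simp, fun i => ?_⟩
        have : (![p i, q i] : Fin 2 → K) = 0 := by
          have hm : (![p i, q i] : Fin 2 → K) ∈ span K (Set.range fun i => ![p i, q i]) :=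
            subset_span ⟨i, rfl⟩
          rw [hbot, mem_bot] at hm
          exact hm
        have h0 : p i = 0 := by simpa using congrFun this 0
        simp [h0]
      · obtain ⟨w0, hw0mem, hw0⟩ := Submodule.ne_bot_iff _ |>.mp hne
        have hle : span K {w0} ≤ span K (Set.range fun i => ![p i, q i]) := by
          rw [span_le, Set.singleton_subset_iff]; exact hw0mem
        have heq : span K {w0} = span K (Set.range fun i => ![p i, q i]) := by
          apply Submodule.eq_of_le_of_finrank_le hle
          rw [finrank_span_singleton hw0]
          omega
        refine ⟨w0 1, -(w0 0), ?_, fun i => ?_⟩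
        · rintro ⟨h1, h0⟩
          apply hw0
          funext k
          fin_cases k
          · simpa using h0
          · exact h1
        · have : (![p i, q i] : Fin 2 → K) ∈ span K {w0} := by
            rw [heq]; exact subset_span ⟨i, rfl⟩
          obtain ⟨c, hc⟩ := mem_span_singleton.mp this
          have h0 : p i = c * w0 0 := by simpa using (congrFun hc 0).symm
          have h1 : q i = c * w0 1 := by simpa using (congrFun hc 1).symm
          rw [h0, h1]; ring
    obtain ⟨α, β, hne0, hvan⟩ := hkey
    apply hne0
    apply hab
    have ha' : a = ∑ i, p i • B i := (B.sum_repr a).symm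
    have hb' : b = ∑ i, q i • B i := (B.sum_repr b).symm
    rw [ha', hb', Finset.smul_sum, Finset.smul_sum, ← Finset.sum_add_distrib]
    rw [show (0 : L) = ∑ i : Fin m, (0 : L) by simp]
    refine Finset.sum_congr rfl fun i _ => ?_
    have := hvan i
    rw [smul_smul, smul_smul, ← add_smul, this, zero_smul]
  -- now use hspan to realize x and y in the span of the rows
  have hexists : ∀ z : Fin 2 → K, ∃ c : Fin m → K, ∑ i, c i • ![p i, q i] = z := by
    intro z
    have : z ∈ span K (Set.range fun i => ![p i, q i]) := by rw [hspan]; trivial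
    exact mem_span_range_iff_exists_fun K |>.mp this
  have hmem : ∀ z : Fin 2 → K, z 0 • x + z 1 • y ∈
      span K (Set.range fun i => p i • x + q i • y) := by
    intro z
    obtain ⟨c, hc⟩ := hexists z
    have hc0 : ∑ i, c i * p i = z 0 := by
      have := congrFun hc 0; simpa [Finset.sum_apply] using this
    have hc1 : ∑ i, c i * q i = z 1 := by
      have := congrFun hc 1; simpa [Finset.sum_apply] using this
    have : z 0 • x + z 1 • y = ∑ i, c i • (p i • x + q i • y) := by
      simp only [smul_add, smul_smul, Finset.sum_add_distrib, ← Finset.sum_smul, hc0, hc1]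
    rw [this]
    exact sum_mem fun i _ => smul_mem _ _ (subset_span ⟨i, rfl⟩)
  apply le_antisymm
  · rw [span_le]
    rintro _ ⟨i, rfl⟩
    exact add_mem (smul_mem _ _ (subset_span (Set.mem_insert _ _)))
      (smul_mem _ _ (subset_span (Set.mem_insert_of_mem _ rfl)))
  · rw [span_le]
    rintro z hz
    rcases hz with rfl | rfl
    · simpa using hmem ![1, 0]
    · simpa using hmem ![0, 1]

lemma rsupp_comb (B : Basis (Fin m) K L) (x y : Fin m → K) (a b : L) :
    rsupp B (a • (fun j => algebraMap K L (x j)) + b • (fun j => algebraMap K L (y j)))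
      = span K (Set.range fun i => B.repr a i • x + B.repr b i • y) := by
  unfold rsupp
  have h : (fun i => fun j =>
      B.repr ((a • (fun j => algebraMap K L (x j)) + b • (fun j => algebraMap K L (y j))) j) i)
      = fun i => B.repr a i • x + B.repr b i • y := by
    funext i j
    have h1 : (a • (fun j => algebraMap K L (x j)) + b • (fun j => algebraMap K L (y j))) j
        = x j • a + y j • b := by
      simp [Algebra.smul_def, mul_comm]
    rw [h1, map_add, map_smul, map_smul]
    simp [mul_comm]
  rw [h]

/-- for `u` with `F_q`-linearly independent entries and a 2-dimensional
subspace `A` of `F_q^m`, the set of representations of the edge `A` (vectors with rank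
support `A` orthogonal to `u`) has exactly `q^m - 1 = |F_{q^m}| - 1` elements, and any
two of them are `F_{q^m}^*`-multiples of each other. -/
theorem stmt6 [Fintype K] [Fintype L] (B : Basis (Fin m) K L)
    (u : Fin m → L) (hu : LinearIndependent K u)
    (A : Submodule K (Fin m → K)) (hA : Module.finrank K A = 2) :
    {v : Fin m → L | rsupp B v = A ∧ (∑ i, v i * u i) = 0}.ncard = Fintype.card L - 1 ∧
    ∀ v ∈ {v : Fin m → L | rsupp B v = A ∧ (∑ i, v i * u i) = 0},
      ∀ w ∈ {v : Fin m → L | rsupp B v = A ∧ (∑ i, v i * u i) = 0},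
        ∃ c : Lˣ, w = (c : L) • v := by

  classical
  set S := {v : Fin m → L | rsupp B v = A ∧ (∑ i, v i * u i) = 0} with hSdef
  set bA : Basis (Fin 2) K A := Module.finBasisOfFinrankEq K A hA with hbA
  set x : Fin m → K := (bA 0 : Fin m → K) with hxdef
  set y : Fin m → K := (bA 1 : Fin m → K) with hydef
  have hxA : x ∈ A := (bA 0).2
  have hyA : y ∈ A := (bA 1).2
  have hind : ∀ α β : K, α • x + β • y = 0 → α = 0 ∧ β = 0 := by
    intro α β h
    have h1 : α • bA 0 + β • bA 1 = 0 := by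
      apply Subtype.ext
      rw [Submodule.coe_add, SetLike.val_smul, SetLike.val_smul, ZeroMemClass.coe_zero]
      exact h
    have h2 := Fintype.linearIndependent_iff.mp bA.linearIndependent ![α, β] (by
      rw [Fin.sum_univ_two]
      simp only [Matrix.cons_val_zero, Matrix.cons_val_one, Matrix.head_cons]
      exact h1)
    exact ⟨h2 0, h2 1⟩
  have hx0 : x ≠ 0 := fun h => one_ne_zero ((hind 1 0 (by simp [h])).1)
  have hy0 : y ≠ 0 := fun h => one_ne_zero ((hind 0 1 (by simp [h])).2)
  have hAspan : A = span K {x, y} := by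
    apply le_antisymm
    · intro z hz
      have h1 : (⟨z, hz⟩ : A) = bA.repr ⟨z, hz⟩ 0 • bA 0 + bA.repr ⟨z, hz⟩ 1 • bA 1 := by
        conv_lhs => rw [← bA.sum_repr ⟨z, hz⟩]
        rw [Fin.sum_univ_two]
      have h2 : z = bA.repr ⟨z, hz⟩ 0 • x + bA.repr ⟨z, hz⟩ 1 • y := by
        have h3 := congrArg (Subtype.val) h1
        rw [Submodule.coe_add, SetLike.val_smul, SetLike.val_smul] at h3
        exact h3
      exact mem_span_pair.mpr ⟨_, _, h2.symm⟩
    · rw [span_le]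
      rintro z hz
      rcases hz with rfl | rfl
      exacts [hxA, hyA]
  have halg : Function.Injective (algebraMap K L) := (algebraMap K L).injective
  set e : K → L := fun c => algebraMap K L c with hedef
  set s : L := ∑ i, e (x i) * u i with hsdef
  set t : L := ∑ i, e (y i) * u i with htdef
  have hsum_ne : ∀ z : Fin m → K, z ≠ 0 → (∑ i, e (z i) * u i) ≠ 0 := by
    intro z hz hzero
    apply hz
    funext i
    have hz2 : ∑ i, z i • u i = 0 := by
      rw [← hzero]
      exact Finset.sum_congr rfl fun i _ => Algebra.smul_def _ _
    exact Fintype.linearIndependent_iff.mp hu z hz2 i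
  have hs : s ≠ 0 := hsum_ne x hx0
  have ht : t ≠ 0 := hsum_ne y hy0
  set b0 : L := -(s * t⁻¹) with hb0def
  have hb0t : s + b0 * t = 0 := by
    rw [hb0def]
    field_simp
    ring
  have hb0K : ∀ c : K, b0 ≠ e c := by
    intro c hc
    have h1 : (∑ i, e (x i + c * y i) * u i) = 0 := by
      have : ∀ i, e (x i + c * y i) * u i = e (x i) * u i + e c * (e (y i) * u i) := by
        intro i
        simp only [hedef, map_add, map_mul]
        ring
      rw [Finset.sum_congr rfl fun i _ => this i, Finset.sum_add_distrib, ← Finset.mul_sum]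
      rw [← hsdef, ← htdef, ← hc]
      exact hb0t
    have h2 : ∀ i, x i + c * y i = 0 := by
      have hz2 : ∑ i, (x + c • y) i • u i = 0 := by
        rw [← h1]
        exact Finset.sum_congr rfl fun i _ => by
          simp only [Pi.add_apply, Pi.smul_apply, smul_eq_mul]
          exact Algebra.smul_def _ _
      intro i
      simpa using Fintype.linearIndependent_iff.mp hu (x + c • y) hz2 i
    have h3 : (1 : K) • x + c • y = 0 := by
      funext i
      simpa using h2 i
    exact one_ne_zero (hind 1 c h3).1
  set X : Fin m → L := fun j => e (x j) with hXdef
  set Y : Fin m → L := fun j => e (y j) with hYdef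
  set v0 : Fin m → L := X + b0 • Y with hv0def
  have habind : ∀ a : L, a ≠ 0 → ∀ α β : K, α • a + β • (a * b0) = 0 → α = 0 ∧ β = 0 := by
    intro a ha α β h
    have h' : a * (e α + e β * b0) = 0 := by
      rw [Algebra.smul_def, Algebra.smul_def] at h
      linear_combination h
    have h2 : e α + e β * b0 = 0 := by
      rcases mul_eq_zero.mp h' with h | h
      · exact absurd h ha
      · exact h
    by_cases hβ : β = 0
    · subst hβ
      simp only [hedef, map_zero, zero_mul, add_zero] at h2
      exact ⟨halg (by simpa using h2), rfl⟩
    · exfalso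
      apply hb0K (-(α / β))
      have heβ : e β ≠ 0 := fun hh =>
        hβ (halg (show algebraMap K L β = algebraMap K L 0 by simpa [hedef] using hh))
      show b0 = algebraMap K L (-(α / β))
      rw [map_neg, map_div₀]
      have hfin : b0 = -(e α) / e β := by
        rw [eq_div_iff heβ]
        linear_combination h2
      rw [neg_div] at hfin
      exact hfin
  clear_value s t b0
  have hortho : ∀ a b : L, (∑ i, (a • X + b • Y) i * u i) = a * s + b * t := by
    intro a b
    have h1 : ∀ i, (a • X + b • Y) i * u i = a * (e (x i) * u i) + b * (e (y i) * u i) := by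
      intro i
      simp only [Pi.add_apply, Pi.smul_apply, smul_eq_mul, hXdef, hYdef]
      ring
    rw [Finset.sum_congr rfl fun i _ => h1 i, Finset.sum_add_distrib, ← Finset.mul_sum,
      ← Finset.mul_sum, hsdef, htdef]
  have hsmul : ∀ a : L, a • v0 = a • X + (a * b0) • Y := by
    intro a
    rw [hv0def, smul_add, smul_smul]
  have hbot0 : rsupp B 0 = ⊥ := by
    unfold rsupp
    rw [span_eq_bot]
    rintro _ ⟨i, rfl⟩
    funext j
    simp
  have hchar : ∀ v, v ∈ S ↔ ∃ a : L, a ≠ 0 ∧ v = a • v0 := by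
    intro v
    constructor
    · rintro ⟨hr, ho⟩
      have hrow : ∀ i, (fun j => B.repr (v j) i) ∈ A := by
        intro i
        rw [← hr]
        exact subset_span ⟨i, rfl⟩
      have hcd : ∀ i, ∃ cd : K × K, (fun j => B.repr (v j) i) = cd.1 • x + cd.2 • y := by
        intro i
        have h1 := hrow i
        rw [hAspan] at h1
        obtain ⟨c, d, hcd⟩ := mem_span_pair.mp h1
        exact ⟨(c, d), hcd.symm⟩
      choose cd hcd using hcd
      set a : L := ∑ i, (cd i).1 • B i with hadef
      set b : L := ∑ i, (cd i).2 • B i with hbdef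
      clear_value a b
      have hveq : v = a • X + b • Y := by
        funext j
        have h1 : v j = ∑ i, B.repr (v j) i • B i := (B.sum_repr (v j)).symm
        have h2 : ∀ i, B.repr (v j) i = (cd i).1 * x j + (cd i).2 * y j := by
          intro i
          have := congrFun (hcd i) j
          simpa using this
        calc v j = ∑ i, ((cd i).1 * x j + (cd i).2 * y j) • B i := by
              rw [h1]; exact Finset.sum_congr rfl fun i _ => by rw [h2 i]
          _ = x j • a + y j • b := by
              rw [hadef, hbdef, Finset.smul_sum, Finset.smul_sum, ← Finset.sum_add_distrib]
              refine Finset.sum_congr rfl fun i _ => ?_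
              rw [add_smul, smul_smul, smul_smul, mul_comm (x j), mul_comm (y j)]
          _ = (a • X + b • Y) j := by
              simp only [Pi.add_apply, Pi.smul_apply, smul_eq_mul, hXdef, hYdef]
              rw [Algebra.smul_def, Algebra.smul_def]
              ring
      have ho2 : a * s + b * t = 0 := by
        rw [← hortho a b, ← hveq]
        exact ho
      have hb : b = a * b0 := by
        have h3 : b * t = -(a * s) := by linear_combination ho2
        apply mul_right_cancel₀ ht
        rw [h3, hb0def]
        field_simp
      have ha : a ≠ 0 := by
        intro h0
        have hbz : b = 0 := by rw [hb, h0, zero_mul]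
        have hvz : v = 0 := by rw [hveq, h0, hbz]; simp
        rw [hvz, hbot0] at hr
        rw [← hr] at hA
        simp at hA
      exact ⟨a, ha, by rw [hveq, hb, hsmul a]⟩
    · rintro ⟨a, ha, rfl⟩
      constructor
      · rw [hsmul a, rsupp_comb B x y a (a * b0),
          span_comb B x y a (a * b0) (habind a ha), ← hAspan]
      · rw [hsmul a, hortho a (a * b0)]
        linear_combination a * hb0t
  have hv0 : v0 ≠ 0 := by
    intro h0
    have hm : (0 : Fin m → L) ∈ S := (hchar 0).mpr ⟨1, one_ne_zero, by rw [h0, smul_zero]⟩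
    obtain ⟨hr, -⟩ := hm
    rw [hbot0] at hr
    rw [← hr] at hA
    simp at hA
  have hS2 : S = (fun a : L => a • v0) '' {a : L | a ≠ 0} := by
    ext v
    rw [Set.mem_image]
    rw [hchar v]
    constructor
    · rintro ⟨a, ha, rfl⟩; exact ⟨a, ha, rfl⟩
    · rintro ⟨a, ha, rfl⟩; exact ⟨a, ha, rfl⟩
  constructor
  · rw [hS2, Set.ncard_image_of_injective _ (smul_left_injective L hv0)]
    have hcompl : {a : L | a ≠ 0} = ({0} : Set L)ᶜ := by ext a; simp
    rw [hcompl, Set.ncard_eq_toFinset_card']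
    simp [Set.toFinset_compl, Finset.card_compl]
  · intro v hv w hw
    obtain ⟨a, ha, rfl⟩ := (hchar v).mp hv
    obtain ⟨a', ha', rfl⟩ := (hchar w).mp hw
    refine ⟨Units.mk0 (a' * a⁻¹) (by simp [ha, ha']), ?_⟩
    rw [Units.val_mk0, smul_smul]
    congr 1
    rw [mul_assoc, inv_mul_cancel₀ ha, mul_one]
end

section
/- Let x, y1, ..., yd in F_q^m be such that <x, y_i> are 2-dimensional subspaces, and let u in F_{q^m}^m have F_q-linearly independent entries. Fix a representation v1 = a1·x + b1·y1 of <x,y1> (orthogonal to u). Then setting b_i = b1 and a_i = -b1·(u·y_i)/(u·x), the vectors v_i = a_i·x + b1·y_i are representations of <x,y_i>, and for any λ1,...,λd in F_q not all zero, λ1·v1 + ... + λd·v_d is a representation of the edge <x, Σ λ_i y_i> (when the latter is 2-dimensional). -/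
open Submodule Module

variable {K L : Type*} [Field K] [Field L] [Algebra K L] {m : ℕ}

/-- The representation `-b·((u·y)/(u·x))·x + b·y` of the edge `⟨x, y⟩` with prescribed
coefficient `b` on `y`, induced by matching at the common vertex `x`. -/
noncomputable def inducedRep (u : Fin m → L) (b : L) (x y : Fin m → K) : Fin m → L :=
  fun j => (-(b * ((∑ t, u t * algebraMap K L (y t)) / (∑ t, u t * algebraMap K L (x t)))))
      * algebraMap K L (x j) + b * algebraMap K L (y j)

lemma dot_eq (u : Fin m → L) (z : Fin m → K) :
    (∑ t, u t * algebraMap K L (z t)) = ∑ t, z t • u t := by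
  simp [Algebra.smul_def, mul_comm]

lemma dot_ne_zero {u : Fin m → L} (hu : LinearIndependent K u) {z : Fin m → K} (hz : z ≠ 0) :
    (∑ t, u t * algebraMap K L (z t)) ≠ 0 := by
  rw [dot_eq]
  intro h
  exact hz (funext fun t => (Fintype.linearIndependent_iff.mp hu) z h t)

lemma repr_comb (B : Basis (Fin m) K L) (a b : L) (x y : Fin m → K) (i j : Fin m) :
    B.repr (a * algebraMap K L (x j) + b * algebraMap K L (y j)) i
      = x j * B.repr a i + y j * B.repr b i := by
  have h1 : a * algebraMap K L (x j) = x j • a := by rw [Algebra.smul_def, mul_comm]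
  have h2 : b * algebraMap K L (y j) = y j • b := by rw [Algebra.smul_def, mul_comm]
  rw [h1, h2, map_add, map_smul, map_smul]
  simp

lemma rsupp_le (B : Basis (Fin m) K L) (a b : L) (x y : Fin m → K) :
    rsupp B (fun j => a * algebraMap K L (x j) + b * algebraMap K L (y j))
      ≤ span K ({x, y} : Set (Fin m → K)) := by
  rw [rsupp]
  apply span_le.2
  rintro _ ⟨i, rfl⟩
  have : (fun j => B.repr (a * algebraMap K L (x j) + b * algebraMap K L (y j)) i)
      = (B.repr a i) • x + (B.repr b i) • y := by
    funext j
    rw [repr_comb]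
    simp [mul_comm]
  rw [show (fun i j => (B.repr (a * algebraMap K L (x j) + b * algebraMap K L (y j))) i) i
      = (fun j => (B.repr (a * algebraMap K L (x j) + b * algebraMap K L (y j))) i) from rfl, this]
  exact add_mem (smul_mem _ _ (subset_span (by simp))) (smul_mem _ _ (subset_span (by simp)))

lemma pair_linIndep_iff (x y : Fin m → K) :
    LinearIndependent K ![x, y] ↔
      finrank K (span K ({x, y} : Set (Fin m → K))) = 2 := by
  rw [linearIndependent_iff_card_eq_finrank_span]
  have : Set.range ![x, y] = ({x, y} : Set (Fin m → K)) := by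
    simp [Matrix.range_cons, Matrix.range_empty, Set.pair_comm]
  rw [Set.finrank, this]
  simp [eq_comm]

lemma rsupp_eq_of (B : Basis (Fin m) K L) {u : Fin m → L} (hu : LinearIndependent K u)
    {a b : L} (hb : b ≠ 0) {x y : Fin m → K} (hxy : LinearIndependent K ![x, y])
    (horth : (∑ j, (a * algebraMap K L (x j) + b * algebraMap K L (y j)) * u j) = 0) :
    rsupp B (fun j => a * algebraMap K L (x j) + b * algebraMap K L (y j))
      = span K ({x, y} : Set (Fin m → K)) := by
  set v : Fin m → L := fun j => a * algebraMap K L (x j) + b * algebraMap K L (y j) with hv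
  have hle := rsupp_le B a b x y
  by_contra hne
  have hfr2 : finrank K (span K ({x, y} : Set (Fin m → K))) = 2 := (pair_linIndep_iff x y).mp hxy
  have hlt : rsupp B v < span K ({x, y} : Set (Fin m → K)) := lt_of_le_of_ne hle hne
  have h1 : finrank K (rsupp B v) < 2 := hfr2 ▸ Submodule.finrank_lt_finrank_of_lt hlt
  have h2 : finrank K (rsupp B v) ≤ 1 := by omega
  obtain ⟨w, hw⟩ := ((rsupp B v).finrank_le_one_iff_isPrincipal).mp h2
  have hgen : ∀ i : Fin m, ∃ c : K, (fun j => B.repr (v j) i) = c • w := by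
    intro i
    have : (fun j => B.repr (v j) i) ∈ rsupp B v := subset_span ⟨i, rfl⟩
    rw [hw, mem_span_singleton] at this
    obtain ⟨c, hc⟩ := this
    exact ⟨c, hc.symm⟩
  choose c hc using hgen
  set s : L := ∑ i, c i • B i with hs
  have hvs : ∀ j, v j = w j • s := by
    intro j
    have := B.sum_repr (v j)
    rw [← this]
    have hrepr : ∀ i, B.repr (v j) i = c i * w j := fun i => by
      have := congrFun (hc i) j; simpa using this
    rw [hs, Finset.smul_sum]
    refine Finset.sum_congr rfl fun i _ => ?_
    rw [hrepr i, mul_comm, mul_smul, smul_comm]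
  have hv0 : ∀ j, v j = 0 := by
    have h0 : s * ∑ j, w j • u j = 0 := by
      rw [← horth, Finset.mul_sum]
      refine Finset.sum_congr rfl fun j _ => ?_
      rw [show v j * u j = (w j • s) * u j by rw [hvs j]]
      rw [smul_mul_assoc, mul_smul_comm]
    rcases mul_eq_zero.mp h0 with hs0 | hw0
    · intro j; rw [hvs j, hs0, smul_zero]
    · have : w = 0 := funext fun t => (Fintype.linearIndependent_iff.mp hu) w hw0 t
      intro j; rw [hvs j, this]; simp
  apply hb
  have hbrepr : ∀ i, B.repr b i = 0 := by
    intro i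
    have hcomb : ∀ j, x j * B.repr a i + y j * B.repr b i = 0 := by
      intro j
      rw [← repr_comb B a b x y i j]
      rw [show a * algebraMap K L (x j) + b * algebraMap K L (y j) = v j from rfl, hv0 j]
      simp
    have hsum : ∑ k : Fin 2, (![B.repr a i, B.repr b i] k) • (![x, y] k) = 0 := by
      funext j
      simp [Fin.sum_univ_two, mul_comm]
      have := hcomb j
      simpa [mul_comm] using this
    have := (Fintype.linearIndependent_iff.mp hxy) ![B.repr a i, B.repr b i] hsum 1
    simpa using this
  have : B.repr b = 0 := Finsupp.ext hbrepr
  have := B.repr.injective (by simpa using this)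
  simpa using this

lemma orth_comb (u : Fin m → L) (a b : L) (x y : Fin m → K) :
    (∑ j, (a * algebraMap K L (x j) + b * algebraMap K L (y j)) * u j)
      = a * (∑ t, u t * algebraMap K L (x t)) + b * (∑ t, u t * algebraMap K L (y t)) := by
  rw [Finset.mul_sum, Finset.mul_sum, ← Finset.sum_add_distrib]
  refine Finset.sum_congr rfl fun j _ => ?_
  ring


/-- fix a representation `v₁ = a₁·x + b₁·y₁` of `⟨x, y₁⟩` orthogonal to `u`.
Setting `bᵢ = b₁` and `aᵢ = -b₁·(u·yᵢ)/(u·x)`, the vectors `vᵢ = aᵢ·x + b₁·yᵢ` are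
representations of `⟨x, yᵢ⟩`, and for any `λ₁, …, λ_d ∈ F_q` not all zero,
`λ₁v₁ + ⋯ + λ_d v_d` is a representation of the edge `⟨x, Σ λᵢyᵢ⟩`
(when the latter is 2-dimensional). -/
theorem stmt7 (B : Basis (Fin m) K L) (u : Fin m → L) (hu : LinearIndependent K u)
    (d : ℕ) (hd : 0 < d) (x : Fin m → K) (y : Fin d → Fin m → K)
    (hxy : ∀ i, LinearIndependent K ![x, y i])
    (a₁ b₁ : L)
    (horth : (∑ j, (a₁ * algebraMap K L (x j) + b₁ * algebraMap K L (y ⟨0, hd⟩ j)) * u j) = 0)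
    (hrep : rsupp B (fun j => a₁ * algebraMap K L (x j) + b₁ * algebraMap K L (y ⟨0, hd⟩ j))
      = Submodule.span K ({x, y ⟨0, hd⟩} : Set (Fin m → K))) :
    (∀ i : Fin d,
      (∑ j, inducedRep u b₁ x (y i) j * u j) = 0 ∧
      rsupp B (inducedRep u b₁ x (y i)) = Submodule.span K ({x, y i} : Set (Fin m → K))) ∧
    (∀ c : Fin d → K, c ≠ 0 →
      Module.finrank K (Submodule.span K ({x, ∑ i, c i • y i} : Set (Fin m → K))) = 2 →
      (∑ j, (∑ i, c i • inducedRep u b₁ x (y i)) j * u j) = 0 ∧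
      rsupp B (∑ i, c i • inducedRep u b₁ x (y i))
        = Submodule.span K ({x, ∑ i, c i • y i} : Set (Fin m → K))) := by
  have hx0 : x ≠ 0 := by simpa using (hxy ⟨0, hd⟩).ne_zero 0
  have hSx : (∑ t, u t * algebraMap K L (x t)) ≠ 0 := dot_ne_zero hu hx0
  -- b₁ ≠ 0
  have hb₁ : b₁ ≠ 0 := by
    intro hb
    subst hb
    have hfun : (fun j => a₁ * algebraMap K L (x j) + (0:L) * algebraMap K L (y ⟨0, hd⟩ j))
        = fun j => a₁ * algebraMap K L (x j) + (0:L) * algebraMap K L (x j) := by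
      funext j; simp
    have hle : rsupp B (fun j => a₁ * algebraMap K L (x j) + (0:L) * algebraMap K L (y ⟨0, hd⟩ j))
        ≤ span K ({x} : Set (Fin m → K)) := by
      rw [hfun]
      simpa using rsupp_le B a₁ 0 x x
    rw [hrep] at hle
    have h2 : finrank K (span K ({x, y ⟨0, hd⟩} : Set (Fin m → K))) = 2 :=
      (pair_linIndep_iff _ _).mp (hxy ⟨0, hd⟩)
    have h1 : finrank K (span K ({x} : Set (Fin m → K))) = 1 := finrank_span_singleton hx0
    have := Submodule.finrank_mono hle
    omega
  -- part 1
  have part1 : ∀ i : Fin d,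
      (∑ j, inducedRep u b₁ x (y i) j * u j) = 0 ∧
      rsupp B (inducedRep u b₁ x (y i)) = Submodule.span K ({x, y i} : Set (Fin m → K)) := by
    intro i
    have horthi : (∑ j, inducedRep u b₁ x (y i) j * u j) = 0 := by
      show (∑ j, ((-(b₁ * ((∑ t, u t * algebraMap K L (y i t)) / (∑ t, u t * algebraMap K L (x t)))))
        * algebraMap K L (x j) + b₁ * algebraMap K L (y i j)) * u j) = 0
      rw [orth_comb]
      field_simp
      ring
    refine ⟨horthi, ?_⟩
    exact rsupp_eq_of B hu hb₁ (hxy i) horthi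
  refine ⟨part1, ?_⟩
  intro c hc h2
  set Y : Fin m → K := ∑ i, c i • y i with hY
  set A : L := ∑ i, c i • (-(b₁ * ((∑ t, u t * algebraMap K L (y i t)) / (∑ t, u t * algebraMap K L (x t))))) with hA
  have hsum_eq : (∑ i, c i • inducedRep u b₁ x (y i))
      = fun j => A * algebraMap K L (x j) + b₁ * algebraMap K L (Y j) := by
    funext j
    rw [Finset.sum_apply]
    have : ∀ i : Fin d, (c i • inducedRep u b₁ x (y i)) j
        = (c i • (-(b₁ * ((∑ t, u t * algebraMap K L (y i t)) / (∑ t, u t * algebraMap K L (x t))))))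
            * algebraMap K L (x j) + b₁ * algebraMap K L (c i * y i j) := by
      intro i
      show c i • ((-(b₁ * ((∑ t, u t * algebraMap K L (y i t)) / (∑ t, u t * algebraMap K L (x t)))))
          * algebraMap K L (x j) + b₁ * algebraMap K L (y i j)) = _
      rw [smul_add]
      congr 1
      · rw [smul_mul_assoc]
      · rw [map_mul, Algebra.smul_def]
        ring
    rw [Finset.sum_congr rfl fun i _ => this i, Finset.sum_add_distrib, ← Finset.sum_mul,
      ← Finset.mul_sum, ← map_sum, ← hA]
    congr 2
    simp [hY, Finset.sum_apply]
  have horth2 : (∑ j, (∑ i, c i • inducedRep u b₁ x (y i)) j * u j) = 0 := by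
    have : ∀ j, (∑ i, c i • inducedRep u b₁ x (y i)) j * u j
        = ∑ i, c i • (inducedRep u b₁ x (y i) j * u j) := by
      intro j
      rw [Finset.sum_apply, Finset.sum_mul]
      exact Finset.sum_congr rfl fun i _ => by rw [Pi.smul_apply, smul_mul_assoc]
    rw [Finset.sum_congr rfl fun j _ => this j, Finset.sum_comm]
    refine Finset.sum_eq_zero fun i _ => ?_
    rw [← Finset.smul_sum, (part1 i).1, smul_zero]
  refine ⟨horth2, ?_⟩
  have hYind : LinearIndependent K ![x, Y] := (pair_linIndep_iff _ _).mpr h2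
  rw [hsum_eq]
  refine rsupp_eq_of B hu hb₁ hYind ?_
  have h := horth2
  simp only [hsum_eq] at h
  exact h
end

section
/- With the notation of matching representations: let x, y_i in F_q^m span edges <x,y_i>, fix v1 = a1·x + b1·y1 orthogonal to u, and let v_i = -b1·((u·y_i)/(u·x))·x + b1·y_i be the induced representations. If instead we use bases <c·x, z_i> with c in F_q^*, z_i = s_i·x + t_i·y_i, s_i in F_q, t_i in F_q^*, then the induced representations v_i' satisfy v_i' = (t_i/t_1)·v_i; in particular, v_i and v_i' are F_q^*-multiples of each other. -/
open Submodule Module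

variable {K L : Type*} [Field K] [Field L] [Algebra K L] {m : ℕ}

/-- with matching representations `vᵢ = -b₁·((u·yᵢ)/(u·x))·x + b₁·yᵢ`
of the edges `⟨x, yᵢ⟩` induced by `v₁`, if instead we use the bases `⟨c·x, zᵢ⟩` with
`c ∈ F_q^*`, `zᵢ = sᵢ·x + tᵢ·yᵢ`, `sᵢ ∈ F_q`, `tᵢ ∈ F_q^*` (so that `b₁' = b₁/t₁`),
the induced representations satisfy `vᵢ' = (tᵢ/t₁)·vᵢ`; in particular `vᵢ` and `vᵢ'`
are `F_q^*`-multiples of each other. -/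
theorem stmt8 (u : Fin m → L) (hu : LinearIndependent K u)
    (d : ℕ) (hd : 0 < d) (x : Fin m → K) (y : Fin d → Fin m → K)
    (hxy : ∀ i, LinearIndependent K ![x, y i])
    (b₁ : L) (hb₁ : b₁ ≠ 0)
    (c : K) (hc : c ≠ 0) (s t : Fin d → K) (ht : ∀ i, t i ≠ 0) :
    ∀ i : Fin d,
      inducedRep u (b₁ / algebraMap K L (t ⟨0, hd⟩)) (c • x) (s i • x + t i • y i)
        = algebraMap K L (t i / t ⟨0, hd⟩) • inducedRep u b₁ x (y i) ∧
      ∃ γ : K, γ ≠ 0 ∧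
        inducedRep u (b₁ / algebraMap K L (t ⟨0, hd⟩)) (c • x) (s i • x + t i • y i)
          = algebraMap K L γ • inducedRep u b₁ x (y i) := by

  intro i
  have hx0 : x ≠ 0 := by
    intro h
    have := (hxy i).ne_zero 0
    simp [h] at this
  have hux : (∑ j, u j * algebraMap K L (x j)) ≠ 0 := by
    intro h
    apply hx0
    have hz := Fintype.linearIndependent_iff.mp hu x ?_
    · funext j; exact hz j
    · rw [← h]
      exact Finset.sum_congr rfl fun j _ => by rw [Algebra.smul_def, mul_comm]
  have hsum1 : (∑ j, u j * algebraMap K L (c * x j)) =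
      algebraMap K L c * ∑ j, u j * algebraMap K L (x j) := by
    rw [Finset.mul_sum]
    exact Finset.sum_congr rfl fun j _ => by simp [map_mul]; ring
  have hsum2 : (∑ j, u j * algebraMap K L (s i * x j + t i * y i j)) =
      algebraMap K L (s i) * (∑ j, u j * algebraMap K L (x j)) +
      algebraMap K L (t i) * (∑ j, u j * algebraMap K L (y i j)) := by
    rw [Finset.mul_sum, Finset.mul_sum, ← Finset.sum_add_distrib]
    exact Finset.sum_congr rfl fun j _ => by
      simp [map_mul, map_add]; ring
  have hc' : algebraMap K L c ≠ 0 := fun h => hc ((map_eq_zero_iff _ (algebraMap K L).injective).mp h)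
  have ht1' : algebraMap K L (t ⟨0, hd⟩) ≠ 0 := fun h => ht _ ((map_eq_zero_iff _ (algebraMap K L).injective).mp h)
  have hti' : algebraMap K L (t i) ≠ 0 := fun h => ht _ ((map_eq_zero_iff _ (algebraMap K L).injective).mp h)
  have heq : inducedRep u (b₁ / algebraMap K L (t ⟨0, hd⟩)) (c • x) (s i • x + t i • y i)
      = algebraMap K L (t i / t ⟨0, hd⟩) • inducedRep u b₁ x (y i) := by
    funext j
    simp only [inducedRep, Pi.smul_apply, Pi.add_apply, smul_eq_mul]
    rw [hsum1, hsum2]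
    set X := ∑ j, u j * algebraMap K L (x j) with hX
    set Y := ∑ j, u j * algebraMap K L (y i j) with hY
    simp only [map_add, map_mul, map_div₀]
    field_simp
    ring
  refine ⟨heq, t i / t ⟨0, hd⟩, div_ne_zero (ht i) (ht _), heq⟩
end

section
/- The function r(X) = rank(G·Yᵀ), where G is a fixed k×n matrix over F_{q^m} and Y is any matrix over F_q whose row space is the subspace X of F_q^n, is a well-defined q-matroid rank function: it satisfies 0 ≤ r(X) ≤ dim X, is monotone under inclusion, and is semimodular: r(A+B) + r(A∩B) ≤ r(A) + r(B). -/
open Submodule Module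

section aux
variable {K L : Type*} [Field K] [Field L] [Algebra K L] {k n : ℕ}
  (G : Matrix (Fin k) (Fin n) L)

noncomputable def phiAux : (Fin n → K) →ₗ[K] (Fin k → L) where
  toFun v := G.mulVec fun j => algebraMap K L (v j)
  map_add' u v := by
    show (G.mulVec fun j => algebraMap K L ((u + v) j)) = _
    have h : (fun j => algebraMap K L ((u + v) j))
        = (fun j => algebraMap K L (u j)) + fun j => algebraMap K L (v j) := by
      funext j; simp
    rw [h, Matrix.mulVec_add]
  map_smul' c v := by
    show (G.mulVec fun j => algebraMap K L ((c • v) j)) = _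
    have h : (fun j => algebraMap K L ((c • v) j))
        = algebraMap K L c • fun j => algebraMap K L (v j) := by
      funext j; simp [Algebra.smul_def]
    rw [h, Matrix.mulVec_smul]
    show _ = c • G.mulVec _
    rw [algebraMap_smul]

lemma span_phi_span (S : Set (Fin n → K)) :
    span L (phiAux G '' (span K S : Set (Fin n → K))) = span L (phiAux G '' S) := by
  refine le_antisymm (span_le.2 ?_) (span_mono (Set.image_mono subset_span))
  rintro - ⟨x, hx, rfl⟩
  induction hx using span_induction with
  | mem x hx => exact subset_span ⟨x, hx, rfl⟩
  | zero => simp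
  | add x y _ _ hx hy => rw [map_add]; exact add_mem hx hy
  | smul c x _ hx =>
      rw [map_smul, ← algebraMap_smul L c (phiAux G x)]
      exact Submodule.smul_mem _ _ hx

lemma rank_eq_aux {t : ℕ} (Y : Matrix (Fin t) (Fin n) K) :
    (G * (Y.map (algebraMap K L)).transpose).rank
      = finrank L (span L (phiAux G '' (span K (Set.range Y) : Set (Fin n → K)))) := by
  rw [Matrix.rank_eq_finrank_span_cols, span_phi_span]
  have hfun : (G * (Y.map (algebraMap K L)).transpose).transpose
      = ⇑(phiAux G) ∘ Y := by
    funext s i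
    simp [phiAux, Matrix.mul_apply, Matrix.mulVec, dotProduct, Function.comp]
  rw [Matrix.col, hfun]
  exact congrArg (fun S => finrank L (span L S)) (Set.range_comp (⇑(phiAux G)) (Y : Fin t → Fin n → K))

end aux

/-- `r(X) = rank(G·Yᵀ)`, for `G` a fixed `k × n` matrix over `F_{q^m}`
and `Y` any matrix over `F_q` with row space `X`, is a well-defined `q`-matroid rank
function: it is independent of the choice of `Y`, satisfies `0 ≤ r(X) ≤ dim X`, is
monotone under inclusion, and is semimodular: `r(A+B) + r(A∩B) ≤ r(A) + r(B)`. -/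
theorem stmt12 {K L : Type*} [Field K] [Field L] [Algebra K L] {k n : ℕ}
    (G : Matrix (Fin k) (Fin n) L) :
    -- well-definedness
    (∀ (X : Submodule K (Fin n → K)) (t t' : ℕ)
        (Y : Matrix (Fin t) (Fin n) K) (Y' : Matrix (Fin t') (Fin n) K),
      Submodule.span K (Set.range Y) = X → Submodule.span K (Set.range Y') = X →
      (G * (Y.map (algebraMap K L)).transpose).rank
        = (G * (Y'.map (algebraMap K L)).transpose).rank) ∧
    -- (r1) 0 ≤ r(X) ≤ dim X
    (∀ (X : Submodule K (Fin n → K)) (t : ℕ) (Y : Matrix (Fin t) (Fin n) K),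
      Submodule.span K (Set.range Y) = X →
      (G * (Y.map (algebraMap K L)).transpose).rank ≤ Module.finrank K X) ∧
    -- (r2) monotonicity
    (∀ (A B : Submodule K (Fin n → K)) (tA tB : ℕ)
        (YA : Matrix (Fin tA) (Fin n) K) (YB : Matrix (Fin tB) (Fin n) K),
      Submodule.span K (Set.range YA) = A → Submodule.span K (Set.range YB) = B →
      A ≤ B →
      (G * (YA.map (algebraMap K L)).transpose).rank
        ≤ (G * (YB.map (algebraMap K L)).transpose).rank) ∧
    -- (r3) semimodularity
    (∀ (A B : Submodule K (Fin n → K)) (tA tB ts ti : ℕ)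
        (YA : Matrix (Fin tA) (Fin n) K) (YB : Matrix (Fin tB) (Fin n) K)
        (Ys : Matrix (Fin ts) (Fin n) K) (Yi : Matrix (Fin ti) (Fin n) K),
      Submodule.span K (Set.range YA) = A → Submodule.span K (Set.range YB) = B →
      Submodule.span K (Set.range Ys) = A ⊔ B → Submodule.span K (Set.range Yi) = A ⊓ B →
      (G * (Ys.map (algebraMap K L)).transpose).rank
          + (G * (Yi.map (algebraMap K L)).transpose).rank
        ≤ (G * (YA.map (algebraMap K L)).transpose).rank
          + (G * (YB.map (algebraMap K L)).transpose).rank) := by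
  have wd : ∀ (X : Submodule K (Fin n → K)) (t : ℕ) (Y : Matrix (Fin t) (Fin n) K),
      Submodule.span K (Set.range Y) = X →
      (G * (Y.map (algebraMap K L)).transpose).rank
        = finrank L (span L (phiAux G '' (X : Set (Fin n → K)))) := by
    intro X t Y hY
    rw [rank_eq_aux, hY]
  refine ⟨?_, ?_, ?_, ?_⟩
  · intro X t t' Y Y' hY hY'
    rw [wd X t Y hY, wd X t' Y' hY']
  · intro X t Y hY
    have : FiniteDimensional K X := inferInstance
    set d := finrank K X with hd
    let b := finBasis K X
    let Y'' : Matrix (Fin d) (Fin n) K := Matrix.of fun i => ((b i : X) : Fin n → K)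
    have hspan : Submodule.span K (Set.range Y'') = X := by
      have : Set.range Y'' = X.subtype '' Set.range b := by
        rw [← Set.range_comp]; rfl
      rw [this, ← Submodule.map_span, b.span_eq, Submodule.map_top, Submodule.range_subtype]
    rw [wd X t Y hY, ← wd X d Y'' hspan]
    exact Matrix.rank_le_width _
  · intro A B tA tB YA YB hA hB hAB
    rw [wd A tA YA hA, wd B tB YB hB]
    exact Submodule.finrank_mono (span_mono (Set.image_mono hAB))
  · intro A B tA tB ts ti YA YB Ys Yi hA hB hs hi
    rw [wd A tA YA hA, wd B tB YB hB, wd _ ts Ys hs, wd _ ti Yi hi]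
    set MA := span L (phiAux G '' (A : Set (Fin n → K))) with hMA
    set MB := span L (phiAux G '' (B : Set (Fin n → K))) with hMB
    have hsup : span L (phiAux G '' ((A ⊔ B : Submodule K (Fin n → K)) : Set (Fin n → K)))
        = MA ⊔ MB := by
      have h1 : (A ⊔ B : Submodule K (Fin n → K))
          = Submodule.span K ((A : Set (Fin n → K)) ∪ (B : Set (Fin n → K))) := by
        rw [Submodule.span_union, Submodule.span_eq, Submodule.span_eq]
      rw [h1, span_phi_span, Set.image_union, Submodule.span_union]
    have hinf : span L (phiAux G '' ((A ⊓ B : Submodule K (Fin n → K)) : Set (Fin n → K)))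
        ≤ MA ⊓ MB := by
      refine le_inf (span_le.2 ?_) (span_le.2 ?_)
      · exact (Set.image_mono (by exact fun x hx => hx.1)).trans subset_span
      · exact (Set.image_mono (by exact fun x hx => hx.2)).trans subset_span
    rw [hsup]
    calc finrank L ↥(MA ⊔ MB)
          + finrank L ↥(span L (phiAux G '' ((A ⊓ B : Submodule K (Fin n → K)) : Set (Fin n → K))))
        ≤ finrank L ↥(MA ⊔ MB) + finrank L ↥(MA ⊓ MB) := by
          exact Nat.add_le_add_left (Submodule.finrank_mono hinf) _
      _ = finrank L MA + finrank L MB := Submodule.finrank_sup_add_finrank_inf_eq MA MB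
end

section
/- For a 2-dimensional subspace A = <x, y> of F_q^m with x, y linearly independent, and u in F_{q^m}^m with F_q-linearly independent entries, the vector v = (u·y)·x - (u·x)·y (entries in F_{q^m}) is orthogonal to u, nonzero, and has rank support equal to A; hence every edge admits a representation. -/
open Submodule Module

variable {K L : Type*} [Field K] [Field L] [Algebra K L] {m : ℕ}

/-- The explicit representation `v = (u·y)·x - (u·x)·y` of the edge `⟨x, y⟩`. -/
noncomputable def edgeRep (u : Fin m → L) (x y : Fin m → K) : Fin m → L :=
  fun j => (∑ i, u i * algebraMap K L (y i)) * algebraMap K L (x j)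
    - (∑ i, u i * algebraMap K L (x i)) * algebraMap K L (y j)

/-- for a 2-dimensional subspace `A = ⟨x, y⟩` of `F_q^m` and `u` with
`F_q`-linearly independent entries, the vector `v = (u·y)·x - (u·x)·y` is orthogonal
to `u`, nonzero, and has rank support `A`; hence every edge admits a representation. -/
theorem stmt16 (B : Basis (Fin m) K L) (u : Fin m → L) (hu : LinearIndependent K u)
    (x y : Fin m → K) (hxy : LinearIndependent K ![x, y]) :
    (∑ j, edgeRep u x y j * u j) = 0 ∧
    edgeRep u x y ≠ 0 ∧
    rsupp B (edgeRep u x y) = Submodule.span K ({x, y} : Set (Fin m → K)) := by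
  have hpair := LinearIndependent.pair_iff.mp hxy
  have hx0 : x ≠ 0 := by
    intro h
    have := (hpair 1 0 (by simp [h])).1
    exact one_ne_zero this
  have hdot : ∀ w : Fin m → K, (∑ i, w i • u i) = 0 → w = 0 := by
    intro w hw
    funext i
    exact Fintype.linearIndependent_iff.mp hu w hw i
  set a := ∑ i, u i * algebraMap K L (y i) with ha_def
  set b := ∑ i, u i * algebraMap K L (x i) with hb_def
  have ha : a = ∑ i, y i • u i := by
    rw [ha_def]
    exact Finset.sum_congr rfl fun i _ => by rw [Algebra.smul_def, mul_comm]
  have hb : b = ∑ i, x i • u i := by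
    rw [hb_def]
    exact Finset.sum_congr rfl fun i _ => by rw [Algebra.smul_def, mul_comm]
  have ha0 : a ≠ 0 := by
    intro h
    rw [ha] at h
    have hy := hdot y h
    exact one_ne_zero (hpair 0 1 (by simp [hy])).2
  have hprop : ∀ c : K, b ≠ c • a := by
    intro c hc
    have hsum : b - c • a = ∑ i, (x i - c * y i) • u i := by
      rw [ha, hb, Finset.smul_sum, ← Finset.sum_sub_distrib]
      exact Finset.sum_congr rfl fun i _ => by rw [smul_smul, ← sub_smul]
    have hw := hdot (fun i => x i - c * y i) (by rw [← hsum, hc, sub_self])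
    have : (1:K) • x + (-c) • y = 0 := by
      funext j
      have := congrFun hw j
      simpa [sub_eq_add_neg] using this
    exact one_ne_zero (hpair 1 (-c) this).1
  set α : Fin m → K := fun i => B.repr a i with hα_def
  set β : Fin m → K := fun i => B.repr b i with hβ_def
  have hα0 : α ≠ 0 := by
    intro h
    apply ha0
    apply B.repr.map_eq_zero_iff.mp
    exact Finsupp.ext fun i => congrFun h i
  have hβprop : ∀ c : K, β ≠ c • α := by
    intro c h
    apply hprop c
    apply B.repr.injective
    rw [map_smul]
    exact Finsupp.ext fun i => by simpa using congrFun h i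
  -- key representation of entries
  have hv_repr : ∀ j i, B.repr (edgeRep u x y j) i = α i * x j - β i * y j := by
    intro j i
    have hv : edgeRep u x y j = x j • a - y j • b := by
      rw [edgeRep, Algebra.smul_def, Algebra.smul_def]
      ring
    rw [hv, map_sub, map_smul, map_smul]
    simp [hα_def, hβ_def, mul_comm]
  have hrow : rsupp B (edgeRep u x y)
      = Submodule.span K (Set.range fun i => α i • x - β i • y) := by
    have hfun : (fun i => fun j => (B.repr (edgeRep u x y j)) i)
        = fun i => α i • x - β i • y := by
      funext i j
      simp [hv_repr j i]
    rw [rsupp, hfun]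
  have h3 : rsupp B (edgeRep u x y) = Submodule.span K ({x, y} : Set (Fin m → K)) := by
    rw [hrow]
    apply le_antisymm
    · rw [Submodule.span_le]
      rintro _ ⟨i, rfl⟩
      exact sub_mem
        (Submodule.smul_mem _ _ (Submodule.subset_span (Set.mem_insert _ _)))
        (Submodule.smul_mem _ _ (Submodule.subset_span (Set.mem_insert_of_mem _ rfl)))
    · obtain ⟨i₁, hα1⟩ : ∃ i, α i ≠ 0 := by
        by_contra h
        push_neg at h
        exact hα0 (funext h)
      set c := β i₁ / α i₁ with hc_def
      have hne : β - c • α ≠ 0 := fun h => hβprop c (sub_eq_zero.mp h)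
      obtain ⟨i₂, h2⟩ : ∃ i, β i - c * α i ≠ 0 := by
        by_contra h
        push_neg at h
        exact hne (funext fun i => by simpa [sub_eq_zero] using h i)
      set r : Fin m → (Fin m → K) := fun i => α i • x - β i • y with hr_def
      have hr : ∀ i, r i ∈ Submodule.span K (Set.range r) :=
        fun i => Submodule.subset_span ⟨i, rfl⟩
      have hkey : ((α i₂ / α i₁) • r i₁ - r i₂) = (β i₂ - c * α i₂) • y := by
        funext j
        simp only [hr_def, hc_def, Pi.sub_apply, Pi.smul_apply, smul_eq_mul]
        field_simp
        ring
      have hy_mem : y ∈ Submodule.span K (Set.range r) := by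
        have hmem : (β i₂ - c * α i₂) • y ∈ Submodule.span K (Set.range r) := by
          rw [← hkey]
          exact sub_mem (Submodule.smul_mem _ _ (hr i₁)) (hr i₂)
        have hne2 : c * α i₂ - β i₂ ≠ 0 := fun h => h2 (by linear_combination -h)
        have := Submodule.smul_mem _ (β i₂ - c * α i₂)⁻¹ hmem
        rwa [smul_smul, inv_mul_cancel₀ h2, one_smul] at this
      have hx_mem : x ∈ Submodule.span K (Set.range r) := by
        have hmem : α i₁ • x ∈ Submodule.span K (Set.range r) := by
          have : α i₁ • x = r i₁ + β i₁ • y := by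
            funext j
            simp [hr_def]
          rw [this]
          exact add_mem (hr i₁) (Submodule.smul_mem _ _ hy_mem)
        have := Submodule.smul_mem _ (α i₁)⁻¹ hmem
        rwa [smul_smul, inv_mul_cancel₀ hα1, one_smul] at this
      rw [Submodule.span_le]
      rintro z (rfl | rfl)
      · exact hx_mem
      · exact hy_mem
  refine ⟨?_, ?_, h3⟩
  · simp only [edgeRep, sub_mul, Finset.sum_sub_distrib, mul_assoc, ← Finset.mul_sum]
    have e1 : ∑ j, algebraMap K L (x j) * u j = b := by
      rw [hb_def]; exact Finset.sum_congr rfl fun j _ => mul_comm _ _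
    have e2 : ∑ j, algebraMap K L (y j) * u j = a := by
      rw [ha_def]; exact Finset.sum_congr rfl fun j _ => mul_comm _ _
    rw [e1, e2]
    ring
  · intro hv
    have hmem : x ∈ rsupp B (edgeRep u x y) :=
      h3 ▸ Submodule.subset_span (Set.mem_insert _ _)
    rw [hv] at hmem
    have : rsupp B (0 : Fin m → L) = ⊥ := by
      rw [rsupp]
      apply le_bot_iff.mp
      rw [Submodule.span_le]
      rintro _ ⟨i, rfl⟩
      simp only [Pi.zero_apply, map_zero, Finsupp.coe_zero, SetLike.mem_coe,
        Submodule.mem_bot]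
      rfl
    rw [this] at hmem
    exact hx0 (Submodule.mem_bot K |>.mp hmem)
end
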